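/- arXiv:1602.06459 — 4 statements merged into one kernel-verified Lean document; each statement's English description precedes it below -/
import Mathlib

section
/- Let m ≥ 1, let C_E > 0 and t > 0. Suppose Q, P : [0,t] → ℝ^m are continuous and there is a finite set S ⊂ [0,t] such that for every s ∈ [0,t] \ S both Q and P are differentiable at s with Q'(s) = P(s) and ‖P'(s)‖ ≤ C_E·(‖Q(s)‖ + 1). Then for every s ∈ [0,t], ‖P(s)‖² + ‖Q(s)‖² ≤ (‖P(0)‖² + ‖Q(0)‖² + 1)·exp(2(C_E+1)s) − 1. In particular, for any compact set K ⊂ ℝ^{2m} there is a compact set K_t ⊂ ℝ^{2m}, depending only on K, t and C_E (and not on the exceptional set S), such that every such trajectory with (Q(0),P(0)) ∈ K satisfies (Q(s),P(s)) ∈ K_t for all s ∈ [0,t]. -/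
/-!
Along the flow, `d/ds (‖P‖² + ‖Q‖²) = 2⟪P, P'⟫ + 2⟪Q, P⟫`, which Cauchy–Schwarz and AM–GM bound
by `2(C_E + 1)(‖P‖² + ‖Q‖² + 1)`. Hence the weighted energy `(‖P‖² + ‖Q‖² + 1) e^{-2(C_E+1)s}`
has nonpositive derivative off the hopping times; being continuous, it is nonincreasing across
them as well, since a continuous function with nonpositive derivative off a finite set is
antitone on each gap and the pieces glue.
-/

open Set Real

theorem antitoneOn_Icc_of_hasDerivAt_nonpos_off_finite {f f' : ℝ → ℝ} {S : Set ℝ}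
    (hS : S.Finite) {a b : ℝ} (hf : ContinuousOn f (Icc a b))
    (hf' : ∀ x ∈ Ioo a b \ S, HasDerivAt f (f' x) x)
    (hf'_nonpos : ∀ x ∈ Ioo a b \ S, f' x ≤ 0) :
    AntitoneOn f (Icc a b) := by
  induction S, hS using Set.Finite.induction_on generalizing a b with
  | empty =>
    simp only [sdiff_empty] at hf' hf'_nonpos
    refine antitoneOn_of_hasDerivWithinAt_nonpos (f' := f') (convex_Icc a b) hf ?_ ?_ <;>
      rw [interior_Icc]
    exacts [fun x hx => (hf' x hx).hasDerivWithinAt, hf'_nonpos]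
  | @insert c S _ _ ih =>
    have mem {a' b'} (ha : a ≤ a') (hb : b' ≤ b) {x} (hx : x ∈ Ioo a' b' \ S) (hxc : x ≠ c) :
        x ∈ Ioo a b \ insert c S :=
      ⟨⟨ha.trans_lt hx.1.1, hx.1.2.trans_le hb⟩, by simp [hxc, hx.2]⟩
    by_cases hc : c ∈ Ioo a b
    · have left : AntitoneOn f (Icc a c) :=
        ih (hf.mono (Icc_subset_Icc_right hc.2.le))
          (fun x hx => hf' x (mem le_rfl hc.2.le hx hx.1.2.ne))
          (fun x hx => hf'_nonpos x (mem le_rfl hc.2.le hx hx.1.2.ne))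
      have right : AntitoneOn f (Icc c b) :=
        ih (hf.mono (Icc_subset_Icc_left hc.1.le))
          (fun x hx => hf' x (mem hc.1.le le_rfl hx hx.1.1.ne'))
          (fun x hx => hf'_nonpos x (mem hc.1.le le_rfl hx hx.1.1.ne'))
      rw [← Icc_union_Icc_eq_Icc hc.1.le hc.2.le]
      exact left.union_right right (isGreatest_Icc hc.1.le) (isLeast_Icc hc.2.le)
    · have hxc {x} (hx : x ∈ Ioo a b \ S) : x ≠ c := fun h => hc (h ▸ hx.1)
      exact ih hf (fun x hx => hf' x (mem le_rfl le_rfl hx (hxc hx)))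
        (fun x hx => hf'_nonpos x (mem le_rfl le_rfl hx (hxc hx)))

section

variable {E : Type*} [NormedAddCommGroup E] [InnerProductSpace ℝ E]

theorem two_inner_add_two_inner_le_of_norm_le {C : ℝ} {q p p' : E}
    (hp' : ‖p'‖ ≤ C * (‖q‖ + 1)) :
    2 * inner ℝ p p' + 2 * inner ℝ q p ≤ 2 * (C + 1) * (‖p‖ ^ 2 + ‖q‖ ^ 2 + 1) := by
  have hC : 0 ≤ C := nonneg_of_mul_nonneg_left ((norm_nonneg _).trans hp') (by positivity)
  have force : inner ℝ p p' ≤ ‖p‖ * (C * (‖q‖ + 1)) :=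
    (real_inner_le_norm p p').trans (mul_le_mul_of_nonneg_left hp' (norm_nonneg p))
  have velocity : inner ℝ q p ≤ ‖q‖ * ‖p‖ := real_inner_le_norm q p
  nlinarith [sq_nonneg (‖p‖ - ‖q‖ - 1), sq_nonneg (‖q‖ - 1), sq_nonneg (‖q‖ - ‖p‖)]

theorem antitoneOn_energy_mul_exp {Q P : ℝ → E} {S : Set ℝ} (hS : S.Finite) {C a b : ℝ}
    (hQ : ContinuousOn Q (Icc a b)) (hP : ContinuousOn P (Icc a b))
    (hflow : ∀ s ∈ Icc a b \ S, HasDerivWithinAt Q (P s) (Icc a b) s ∧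
      ∃ P' : E, HasDerivWithinAt P P' (Icc a b) s ∧ ‖P'‖ ≤ C * (‖Q s‖ + 1)) :
    AntitoneOn (fun s => (‖P s‖ ^ 2 + ‖Q s‖ ^ 2 + 1) * exp (-(2 * (C + 1) * s))) (Icc a b) := by
  choose! hQ' P' hP' hP'_le using hflow
  set k := 2 * (C + 1)
  have hderiv (x : ℝ) (hx : x ∈ Ioo a b \ S) :
      HasDerivAt (fun s => (‖P s‖ ^ 2 + ‖Q s‖ ^ 2 + 1) * exp (-(k * s)))
      ((2 * inner ℝ (P x) (P' x) + 2 * inner ℝ (Q x) (P x)) * exp (-(k * x)) +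
        (‖P x‖ ^ 2 + ‖Q x‖ ^ 2 + 1) * (exp (-(k * x)) * -k)) x := by
    have hx' : x ∈ Icc a b \ S := ⟨Ioo_subset_Icc_self hx.1, hx.2⟩
    have hnhds : Icc a b ∈ nhds x := Icc_mem_nhds hx.1.1 hx.1.2
    have hQx := (hQ' x hx').hasDerivAt hnhds
    have hPx := (hP' x hx').hasDerivAt hnhds
    refine ((hPx.norm_sq.add hQx.norm_sq).add_const 1).mul ?_
    simpa using ((hasDerivAt_id x).const_mul k).neg.exp
  refine antitoneOn_Icc_of_hasDerivAt_nonpos_off_finite hS ?_ hderiv fun x hx => ?_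
  · fun_prop
  · have growth := two_inner_add_two_inner_le_of_norm_le (p := P x)
      (hP'_le x ⟨Ioo_subset_Icc_self hx.1, hx.2⟩)
    nlinarith [exp_pos (-(k * x))]

theorem norm_sq_add_norm_sq_le_of_flow {Q P : ℝ → E} {S : Set ℝ} (hS : S.Finite) {C a b : ℝ}
    (hQ : ContinuousOn Q (Icc a b)) (hP : ContinuousOn P (Icc a b))
    (hflow : ∀ s ∈ Icc a b \ S, HasDerivWithinAt Q (P s) (Icc a b) s ∧
      ∃ P' : E, HasDerivWithinAt P P' (Icc a b) s ∧ ‖P'‖ ≤ C * (‖Q s‖ + 1))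
    {s : ℝ} (hs : s ∈ Icc a b) :
    ‖P s‖ ^ 2 + ‖Q s‖ ^ 2 ≤ (‖P a‖ ^ 2 + ‖Q a‖ ^ 2 + 1) * exp (2 * (C + 1) * (s - a)) - 1 := by
  set k := 2 * (C + 1)
  have decay :=
    antitoneOn_energy_mul_exp hS hQ hP hflow (left_mem_Icc.2 (hs.1.trans hs.2)) hs hs.1
  have shifted : ‖P s‖ ^ 2 + ‖Q s‖ ^ 2 + 1 ≤ (‖P a‖ ^ 2 + ‖Q a‖ ^ 2 + 1) * exp (k * (s - a)) :=
    calc ‖P s‖ ^ 2 + ‖Q s‖ ^ 2 + 1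
        = (‖P s‖ ^ 2 + ‖Q s‖ ^ 2 + 1) * exp (-(k * s)) * exp (k * s) := by
          rw [mul_assoc, ← exp_add, neg_add_cancel, exp_zero, mul_one]
      _ ≤ (‖P a‖ ^ 2 + ‖Q a‖ ^ 2 + 1) * exp (-(k * a)) * exp (k * s) := by gcongr
      _ = (‖P a‖ ^ 2 + ‖Q a‖ ^ 2 + 1) * exp (k * (s - a)) := by
          rw [mul_assoc, ← exp_add]; ring_nf
  linarith

end

section

variable {E F : Type*} [SeminormedAddCommGroup E] [SeminormedAddCommGroup F]

theorem Prod.norm_sq_le_norm_fst_sq_add_norm_snd_sq (x : E × F) :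
    ‖x‖ ^ 2 ≤ ‖x.1‖ ^ 2 + ‖x.2‖ ^ 2 := by
  rw [Prod.norm_def]
  rcases max_choice ‖x.1‖ ‖x.2‖ with h | h <;> rw [h] <;>
    nlinarith [sq_nonneg ‖x.1‖, sq_nonneg ‖x.2‖]

theorem Prod.norm_fst_sq_add_norm_snd_sq_le (x : E × F) :
    ‖x.1‖ ^ 2 + ‖x.2‖ ^ 2 ≤ 2 * ‖x‖ ^ 2 := by
  have h1 := pow_le_pow_left₀ (norm_nonneg _) (norm_fst_le x) 2
  have h2 := pow_le_pow_left₀ (norm_nonneg _) (norm_snd_le x) 2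
  linarith

end

theorem stmt_3_general (m : ℕ) (C_E t : ℝ) (hC : 0 < C_E) :
    (∀ (Q P : ℝ → EuclideanSpace ℝ (Fin m)) (S : Set ℝ), S.Finite →
      ContinuousOn Q (Set.Icc 0 t) → ContinuousOn P (Set.Icc 0 t) →
      (∀ s ∈ Set.Icc 0 t \ S,
        HasDerivWithinAt Q (P s) (Set.Icc 0 t) s ∧
        ∃ P' : EuclideanSpace ℝ (Fin m),
          HasDerivWithinAt P P' (Set.Icc 0 t) s ∧ ‖P'‖ ≤ C_E * (‖Q s‖ + 1)) →
      ∀ s ∈ Set.Icc 0 t,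
        ‖P s‖ ^ 2 + ‖Q s‖ ^ 2
          ≤ (‖P 0‖ ^ 2 + ‖Q 0‖ ^ 2 + 1) * Real.exp (2 * (C_E + 1) * s) - 1) ∧
    (∀ K : Set (EuclideanSpace ℝ (Fin m) × EuclideanSpace ℝ (Fin m)), IsCompact K →
      ∃ Kt : Set (EuclideanSpace ℝ (Fin m) × EuclideanSpace ℝ (Fin m)), IsCompact Kt ∧
        ∀ (Q P : ℝ → EuclideanSpace ℝ (Fin m)) (S : Set ℝ), S.Finite →
          ContinuousOn Q (Set.Icc 0 t) → ContinuousOn P (Set.Icc 0 t) →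
          (∀ s ∈ Set.Icc 0 t \ S,
            HasDerivWithinAt Q (P s) (Set.Icc 0 t) s ∧
            ∃ P' : EuclideanSpace ℝ (Fin m),
              HasDerivWithinAt P P' (Set.Icc 0 t) s ∧ ‖P'‖ ≤ C_E * (‖Q s‖ + 1)) →
          (Q 0, P 0) ∈ K → ∀ s ∈ Set.Icc 0 t, (Q s, P s) ∈ Kt) := by
  refine ⟨fun Q P S hS hQ hP hflow s hs => by
    simpa using norm_sq_add_norm_sq_le_of_flow hS hQ hP hflow hs, fun K hK => ?_⟩
  obtain ⟨R, hR⟩ := hK.isBounded.subset_closedBall 0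
  refine ⟨Metric.closedBall 0 √((2 * R ^ 2 + 1) * exp (2 * (C_E + 1) * t)),
    isCompact_closedBall _ _, fun Q P S hS hQ hP hflow h0 s hs => ?_⟩
  have hR0 : ‖(Q 0, P 0)‖ ^ 2 ≤ R ^ 2 :=
    pow_le_pow_left₀ (norm_nonneg _) (mem_closedBall_zero_iff.1 (hR h0)) 2
  rw [mem_closedBall_zero_iff, Real.le_sqrt (norm_nonneg _) (by positivity)]
  calc ‖(Q s, P s)‖ ^ 2 ≤ ‖P s‖ ^ 2 + ‖Q s‖ ^ 2 := by
        simpa [add_comm] using Prod.norm_sq_le_norm_fst_sq_add_norm_snd_sq (Q s, P s)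
    _ ≤ (‖P 0‖ ^ 2 + ‖Q 0‖ ^ 2 + 1) * exp (2 * (C_E + 1) * s) - 1 := by
        simpa using norm_sq_add_norm_sq_le_of_flow hS hQ hP hflow hs
    _ ≤ (‖P 0‖ ^ 2 + ‖Q 0‖ ^ 2 + 1) * exp (2 * (C_E + 1) * s) := sub_le_self _ zero_le_one
    _ ≤ (2 * R ^ 2 + 1) * exp (2 * (C_E + 1) * t) := by
        have hK0 := Prod.norm_fst_sq_add_norm_snd_sq_le (Q 0, P 0)
        gcongr
        · linarith
        · exact hs.2

/-- A priori confinement bound for frozen Gaussian trajectories with surface hopping.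
If `Q, P : [0,t] → ℝ^m` are continuous, and outside a finite set `S` of (hopping) times
one has `Q' = P` and `‖P'‖ ≤ C_E(‖Q‖+1)`, then
`‖P(s)‖² + ‖Q(s)‖² ≤ (‖P(0)‖² + ‖Q(0)‖² + 1) exp(2(C_E+1)s) − 1` on `[0,t]`;
in particular any compact set `K` of initial data yields a compact set `K_t`
(independent of the exceptional set) containing all such trajectories up to time `t`. -/
theorem stmt_3 (m : ℕ) (hm : 1 ≤ m) (C_E t : ℝ) (hC : 0 < C_E) (ht : 0 < t) :
    (∀ (Q P : ℝ → EuclideanSpace ℝ (Fin m)) (S : Set ℝ), S.Finite →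
      ContinuousOn Q (Set.Icc 0 t) → ContinuousOn P (Set.Icc 0 t) →
      (∀ s ∈ Set.Icc 0 t \ S,
        HasDerivWithinAt Q (P s) (Set.Icc 0 t) s ∧
        ∃ P' : EuclideanSpace ℝ (Fin m),
          HasDerivWithinAt P P' (Set.Icc 0 t) s ∧ ‖P'‖ ≤ C_E * (‖Q s‖ + 1)) →
      ∀ s ∈ Set.Icc 0 t,
        ‖P s‖ ^ 2 + ‖Q s‖ ^ 2
          ≤ (‖P 0‖ ^ 2 + ‖Q 0‖ ^ 2 + 1) * Real.exp (2 * (C_E + 1) * s) - 1) ∧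
    (∀ K : Set (EuclideanSpace ℝ (Fin m) × EuclideanSpace ℝ (Fin m)), IsCompact K →
      ∃ Kt : Set (EuclideanSpace ℝ (Fin m) × EuclideanSpace ℝ (Fin m)), IsCompact Kt ∧
        ∀ (Q P : ℝ → EuclideanSpace ℝ (Fin m)) (S : Set ℝ), S.Finite →
          ContinuousOn Q (Set.Icc 0 t) → ContinuousOn P (Set.Icc 0 t) →
          (∀ s ∈ Set.Icc 0 t \ S,
            HasDerivWithinAt Q (P s) (Set.Icc 0 t) s ∧
            ∃ P' : EuclideanSpace ℝ (Fin m),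
              HasDerivWithinAt P P' (Set.Icc 0 t) s ∧ ‖P'‖ ≤ C_E * (‖Q s‖ + 1)) →
          (Q 0, P 0) ∈ K → ∀ s ∈ Set.Icc 0 t, (Q s, P s) ∈ Kt) :=
  stmt_3_general m C_E t hC
end

section
/- Let m ≥ 1 and let A, B, C, D be m × m real matrices such that the 2m × 2m block matrix J = fromBlocks A B C D is symplectic, i.e. JᵀΩJ = Ω where Ω = fromBlocks 0 I_m (−I_m) 0. Then the m × m complex matrix Z := (A + D) + i·(C − B) is invertible. -/
/-!
With `P = (1  i•1)`, the matrix of `(q, p) ↦ q + i p`, one has `Z = P J Pᴴ` and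
`Pᴴ P = 1 + i Ω`. Since `Jᵀ Ω J = Ω`, this gives `Zᴴ Z = (J Pᴴ)ᴴ (J Pᴴ) + i P Ω Pᴴ`, and
`P Ω Pᴴ = -2i • 1`. Hence `Zᴴ Z` is a positive semidefinite matrix plus `2 • 1`, so it is
positive definite, and `Z` is invertible.
-/

open Complex
open scoped ComplexOrder

namespace Matrix

lemma conjTranspose_map_ofReal {m n : Type*} (M : Matrix m n ℝ) :
    (M.map ofReal)ᴴ = Mᵀ.map ofReal := by
  rw [← conjTranspose_map _ fun _ ↦ (conj_ofReal _).symm, conjTranspose_eq_transpose_of_trivial]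

variable {n : Type*} [DecidableEq n]

noncomputable def qpToComplex (n : Type*) [DecidableEq n] : Matrix n (n ⊕ n) ℂ :=
  fromCols 1 (I • 1)

lemma conjTranspose_qpToComplex : (qpToComplex n)ᴴ = fromRows 1 (-I • 1) := by
  simp [qpToComplex, conjTranspose_fromCols_eq_fromRows_conjTranspose]

variable [Fintype n]

/-- For a real `J`, this is the formula `Z = ∂_z (Q + i P)` with `∂_z = ∂_q - i ∂_p`. -/
lemma qpToComplex_mul_fromBlocks_mul_conjTranspose (A B C D : Matrix n n ℂ) :
    qpToComplex n * fromBlocks A B C D * (qpToComplex n)ᴴ = (A + D) + I • (C - B) := by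
  rw [conjTranspose_qpToComplex, qpToComplex, fromCols_mul_fromBlocks, fromCols_mul_fromRows]
  simp only [Matrix.one_mul, Matrix.mul_one, Matrix.mul_smul, Matrix.smul_mul, smul_add,
    smul_smul]
  match_scalars <;> simp

lemma conjTranspose_qpToComplex_mul_self :
    (qpToComplex n)ᴴ * qpToComplex n = 1 + I • fromBlocks 0 1 (-1) 0 := by
  rw [conjTranspose_qpToComplex, qpToComplex, fromRows_mul_fromCols, ← fromBlocks_one,
    fromBlocks_smul, fromBlocks_add]
  simp [smul_smul]

lemma conjTranspose_mul_self_qpToComplex_conj {J : Matrix (n ⊕ n) (n ⊕ n) ℂ}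
    (hJ : Jᴴ * fromBlocks 0 1 (-1) 0 * J = fromBlocks 0 1 (-1) 0) :
    (qpToComplex n * J * (qpToComplex n)ᴴ)ᴴ * (qpToComplex n * J * (qpToComplex n)ᴴ) =
      (J * (qpToComplex n)ᴴ)ᴴ * (J * (qpToComplex n)ᴴ) + (2 : ℂ) • 1 := by
  set P := qpToComplex n
  have hΩ : P * (fromBlocks 0 1 (-1) 0 : Matrix (n ⊕ n) (n ⊕ n) ℂ) * Pᴴ =
      (-2 * I) • (1 : Matrix n n ℂ) := by
    rw [qpToComplex_mul_fromBlocks_mul_conjTranspose]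
    module
  calc (P * J * Pᴴ)ᴴ * (P * J * Pᴴ) = P * Jᴴ * (Pᴴ * P) * J * Pᴴ := by
        simp only [conjTranspose_mul, conjTranspose_conjTranspose, Matrix.mul_assoc]
    _ = P * (Jᴴ * J) * Pᴴ + I • (P * (Jᴴ * fromBlocks 0 1 (-1) 0 * J) * Pᴴ) := by
        rw [conjTranspose_qpToComplex_mul_self]
        simp only [Matrix.mul_add, Matrix.add_mul, Matrix.mul_smul, Matrix.smul_mul,
          Matrix.mul_one, Matrix.mul_assoc]
    _ = (J * Pᴴ)ᴴ * (J * Pᴴ) + (2 : ℂ) • 1 := by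
        rw [hJ, hΩ, smul_smul]
        simp only [conjTranspose_mul, conjTranspose_conjTranspose, Matrix.mul_assoc]
        congr 2
        ring_nf; simp

lemma isUnit_qpToComplex_conj {J : Matrix (n ⊕ n) (n ⊕ n) ℂ}
    (hJ : Jᴴ * fromBlocks 0 1 (-1) 0 * J = fromBlocks 0 1 (-1) 0) :
    IsUnit (qpToComplex n * J * (qpToComplex n)ᴴ) := by
  have hpos : ((qpToComplex n * J * (qpToComplex n)ᴴ)ᴴ *
      (qpToComplex n * J * (qpToComplex n)ᴴ)).PosDef := by
    rw [conjTranspose_mul_self_qpToComplex_conj hJ, add_comm]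
    exact (PosDef.one.smul two_pos).add_posSemidef (posSemidef_conjTranspose_mul_self _)
  exact isUnit_of_mul_isUnit_right hpos.isUnit

lemma conjTranspose_map_ofReal_mul_mul_self {J : Matrix (n ⊕ n) (n ⊕ n) ℝ}
    (hJ : Jᵀ * fromBlocks 0 1 (-1) 0 * J = fromBlocks 0 1 (-1) 0) :
    (J.map ofReal)ᴴ * fromBlocks 0 1 (-1) 0 * J.map ofReal = fromBlocks 0 1 (-1) 0 := by
  have hΩ : ofRealHom.mapMatrix (fromBlocks 0 1 (-1) 0 : Matrix (n ⊕ n) (n ⊕ n) ℝ) =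
      fromBlocks 0 1 (-1) 0 := by
    rw [RingHom.mapMatrix_apply, fromBlocks_map]
    simp only [← RingHom.mapMatrix_apply, map_zero, map_one, map_neg]
  calc (J.map ofReal)ᴴ * fromBlocks 0 1 (-1) 0 * J.map ofReal
      = ofRealHom.mapMatrix (Jᵀ * fromBlocks 0 1 (-1) 0 * J) := by
        rw [map_mul, map_mul, hΩ, conjTranspose_map_ofReal]; rfl
    _ = fromBlocks 0 1 (-1) 0 := by rw [hJ, hΩ]

end Matrix

open Matrix

theorem stmt_5_general (m : ℕ) (A B C D : Matrix (Fin m) (Fin m) ℝ)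
    (hJ : (Matrix.fromBlocks A B C D)ᵀ * Matrix.fromBlocks 0 1 (-1) 0 *
        Matrix.fromBlocks A B C D = Matrix.fromBlocks 0 1 (-1) 0) :
    IsUnit ((A + D).map (Complex.ofReal) + Complex.I • (C - B).map (Complex.ofReal)) := by
  have hZ := isUnit_qpToComplex_conj (conjTranspose_map_ofReal_mul_mul_self hJ)
  rwa [fromBlocks_map, qpToComplex_mul_fromBlocks_mul_conjTranspose,
    ← Matrix.map_add _ ofReal_add, ← Matrix.map_sub _ ofReal_sub] at hZ

/-- If the block matrix `J = [[A, B],[C, D]]` is symplectic (`JᵀΩJ = Ω` with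
`Ω = [[0, I],[−I, 0]]`), then the complex matrix `Z = (A + D) + i(C − B)` is invertible. -/
theorem stmt_5 (m : ℕ) (hm : 1 ≤ m) (A B C D : Matrix (Fin m) (Fin m) ℝ)
    (hJ : (Matrix.fromBlocks A B C D)ᵀ * Matrix.fromBlocks 0 1 (-1) 0 *
        Matrix.fromBlocks A B C D = Matrix.fromBlocks 0 1 (-1) 0) :
    IsUnit ((A + D).map (Complex.ofReal) + Complex.I • (C - B).map (Complex.ofReal)) :=
  stmt_5_general m A B C D hJ
end

section
/- Let n ≥ 1, let H : ℝ → Matrix(n, n, ℂ) be differentiable at x₀ with H(x) Hermitian for all x. Let ψ_k, ψ_l : ℝ → ℂ^n be differentiable at x₀ and E_k, E_l : ℝ → ℝ differentiable at x₀ such that H(x)·ψ_k(x) = E_k(x)·ψ_k(x) and H(x)·ψ_l(x) = E_l(x)·ψ_l(x) for all x in a neighborhood of x₀, ⟨ψ_l(x₀), ψ_k(x₀)⟩ = 0, and E_k(x₀) ≠ E_l(x₀). Then ⟨ψ_l(x₀), ψ_k'(x₀)⟩ = ⟨ψ_l(x₀), H'(x₀)·ψ_k(x₀)⟩ / (E_k(x₀)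 − E_l(x₀)). -/
open Matrix Filter Topology

/-!
Differentiating `H ψₖ = Eₖ ψₖ` gives `H' ψₖ + H ψₖ' = Eₖ' ψₖ + Eₖ ψₖ'`. Pairing with `ψₗ`, the
term `Eₖ' ⟨ψₗ, ψₖ⟩` vanishes by orthogonality and, since `H` is Hermitian,
`⟨ψₗ, H ψₖ'⟩ = ⟨H ψₗ, ψₖ'⟩ = Eₗ ⟨ψₗ, ψₖ'⟩`. Hence `⟨ψₗ, H' ψₖ⟩ = (Eₖ - Eₗ) ⟨ψₗ, ψₖ'⟩`.
-/

section Algebra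

variable {n α : Type*} [Fintype n] [CommRing α] [StarRing α]

theorem Matrix.IsHermitian.star_dotProduct_mulVec_of_mulVec_eq_smul {A : Matrix n n α}
    (hA : A.IsHermitian) {v : n → α} {μ : α} (hv : A *ᵥ v = μ • v) (w : n → α) :
    star v ⬝ᵥ (A *ᵥ w) = star μ * (star v ⬝ᵥ w) := by
  have hvA : star v ᵥ* A = star μ • star v := by
    conv_lhs => rw [← hA.eq]
    rw [← star_mulVec, hv, star_smul]
  rw [dotProduct_mulVec, hvA, smul_dotProduct, smul_eq_mul]

theorem Matrix.IsHermitian.star_dotProduct_mulVec_eq_sub_mul {A A' : Matrix n n α}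
    (hA : A.IsHermitian) {v w w' : n → α} {μ E E' : α} (hv : A *ᵥ v = μ • v)
    (horth : star v ⬝ᵥ w = 0) (hderiv : A' *ᵥ w + A *ᵥ w' = E' • w + E • w') :
    star v ⬝ᵥ (A' *ᵥ w) = (E - star μ) * (star v ⬝ᵥ w') := by
  have h := congrArg (star v ⬝ᵥ ·) hderiv
  simp only [dotProduct_add, dotProduct_smul, smul_eq_mul, horth,
    hA.star_dotProduct_mulVec_of_mulVec_eq_smul hv] at h
  linear_combination h

end Algebra

section Calculus

variable {𝕜 : Type*} [NontriviallyNormedField 𝕜] {m n : Type*} [Fintype n]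

theorem hasDerivAt_mulVec {𝔸 : Type*} [NormedCommRing 𝔸] [NormedAlgebra 𝕜 𝔸]
    {H : 𝕜 → Matrix m n 𝔸} {H' : Matrix m n 𝔸} {ψ : 𝕜 → n → 𝔸} {ψ' : n → 𝔸} {x₀ : 𝕜}
    (hH : ∀ i j, HasDerivAt (fun x => H x i j) (H' i j) x₀) (hψ : HasDerivAt ψ ψ' x₀) :
    HasDerivAt (fun x => H x *ᵥ ψ x) (H' *ᵥ ψ x₀ + H x₀ *ᵥ ψ') x₀ :=
  hasDerivAt_pi.2 fun i => by
    simpa only [mulVec, dotProduct, Pi.add_apply, Finset.sum_add_distrib] using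
      HasDerivAt.fun_sum fun j _ => (hH i j).fun_mul (hasDerivAt_pi.1 hψ j)

theorem mulVec_add_mulVec_eq_of_eventually_mulVec_eq_smul {𝕜' : Type*}
    [NontriviallyNormedField 𝕜'] [NormedAlgebra 𝕜 𝕜']
    {H : 𝕜 → Matrix n n 𝕜'} {H' : Matrix n n 𝕜'} {ψ : 𝕜 → n → 𝕜'} {ψ' : n → 𝕜'}
    {E : 𝕜 → 𝕜'} {E' : 𝕜'} {x₀ : 𝕜}
    (hH : ∀ i j, HasDerivAt (fun x => H x i j) (H' i j) x₀) (hψ : HasDerivAt ψ ψ' x₀)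
    (hE : HasDerivAt E E' x₀) (heig : ∀ᶠ x in 𝓝 x₀, H x *ᵥ ψ x = E x • ψ x) :
    H' *ᵥ ψ x₀ + H x₀ *ᵥ ψ' = E' • ψ x₀ + E x₀ • ψ' := by
  rw [add_comm (E' • ψ x₀)]
  exact (hasDerivAt_mulVec hH hψ).unique ((hE.smul hψ).congr_of_eventuallyEq heig)

end Calculus

theorem stmt_10_general (n : ℕ) (x₀ : ℝ)
    (H : ℝ → Matrix (Fin n) (Fin n) ℂ) (H' : Matrix (Fin n) (Fin n) ℂ)
    (hHderiv : ∀ i j, HasDerivAt (fun x => H x i j) (H' i j) x₀)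
    (hHerm : ∀ x, (H x).IsHermitian)
    (ψk ψl : ℝ → Fin n → ℂ) (ψk' : Fin n → ℂ)
    (hψk : ∀ i, HasDerivAt (fun x => ψk x i) (ψk' i) x₀)
    (Ek El : ℝ → ℝ)
    (hEk : DifferentiableAt ℝ Ek x₀)
    (heigk : ∀ᶠ x in nhds x₀, (H x).mulVec (ψk x) = ((Ek x : ℂ)) • ψk x)
    (heigl : ∀ᶠ x in nhds x₀, (H x).mulVec (ψl x) = ((El x : ℂ)) • ψl x)
    (horth : ∑ i, (starRingEnd ℂ) (ψl x₀ i) * ψk x₀ i = 0)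
    (hgap : Ek x₀ ≠ El x₀) :
    ∑ i, (starRingEnd ℂ) (ψl x₀ i) * ψk' i
      = (∑ i, (starRingEnd ℂ) (ψl x₀ i) * (H'.mulVec (ψk x₀)) i)
          / ((Ek x₀ : ℂ) - (El x₀ : ℂ)) := by
  have hderiv := mulVec_add_mulVec_eq_of_eventually_mulVec_eq_smul hHderiv
    (hasDerivAt_pi.2 hψk) hEk.hasDerivAt.ofReal_comp heigk
  have key := (hHerm x₀).star_dotProduct_mulVec_eq_sub_mul heigl.self_of_nhds horth hderiv
  rw [Complex.star_def, Complex.conj_ofReal] at key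
  have hne : (Ek x₀ : ℂ) - El x₀ ≠ 0 := sub_ne_zero.2 (Complex.ofReal_injective.ne hgap)
  change star (ψl x₀) ⬝ᵥ ψk' = star (ψl x₀) ⬝ᵥ (H' *ᵥ ψk x₀) / _
  rw [key, mul_div_cancel_left₀ _ hne]

/-- First-order perturbation theory formula for the non-adiabatic coupling:
if `H(x)ψ_k(x) = E_k(x)ψ_k(x)` and `H(x)ψ_l(x) = E_l(x)ψ_l(x)` near `x₀` with `H`
Hermitian, `⟨ψ_l(x₀), ψ_k(x₀)⟩ = 0` and `E_k(x₀) ≠ E_l(x₀)`, then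
`⟨ψ_l, ψ_k'⟩ = ⟨ψ_l, H'ψ_k⟩ / (E_k − E_l)` at `x₀`. -/
theorem stmt_10 (n : ℕ) (hn : 1 ≤ n) (x₀ : ℝ)
    (H : ℝ → Matrix (Fin n) (Fin n) ℂ) (H' : Matrix (Fin n) (Fin n) ℂ)
    (hHderiv : ∀ i j, HasDerivAt (fun x => H x i j) (H' i j) x₀)
    (hHerm : ∀ x, (H x).IsHermitian)
    (ψk ψl : ℝ → Fin n → ℂ) (ψk' ψl' : Fin n → ℂ)
    (hψk : ∀ i, HasDerivAt (fun x => ψk x i) (ψk' i) x₀)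
    (hψl : ∀ i, HasDerivAt (fun x => ψl x i) (ψl' i) x₀)
    (Ek El : ℝ → ℝ)
    (hEk : DifferentiableAt ℝ Ek x₀) (hEl : DifferentiableAt ℝ El x₀)
    (heigk : ∀ᶠ x in nhds x₀, (H x).mulVec (ψk x) = ((Ek x : ℂ)) • ψk x)
    (heigl : ∀ᶠ x in nhds x₀, (H x).mulVec (ψl x) = ((El x : ℂ)) • ψl x)
    (horth : ∑ i, (starRingEnd ℂ) (ψl x₀ i) * ψk x₀ i = 0)
    (hgap : Ek x₀ ≠ El x₀) :
    ∑ i, (starRingEnd ℂ) (ψl x₀ i) * ψk' i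
      = (∑ i, (starRingEnd ℂ) (ψl x₀ i) * (H'.mulVec (ψk x₀)) i)
          / ((Ek x₀ : ℂ) - (El x₀ : ℂ)) :=
  stmt_10_general n x₀ H H' hHderiv hHerm ψk ψl ψk' hψk Ek El hEk heigk heigl horth hgap
end

section
/- Let n ≥ 1, let M : ℝ → Matrix(n, n, ℂ) and F : ℝ → ℝ be differentiable at x₀, and set H(x) := F(x)·M(x). Let ψ_k, ψ_l : ℝ → ℂ^n and λ_k, λ_l : ℝ → ℝ with M(x)·ψ_k(x) = λ_k(x)·ψ_k(x) and M(x)·ψ_l(x) = λ_l(x)·ψ_l(x) for all x near x₀, and suppose ⟨ψ_l(x₀), ψ_k(x₀)⟩ = 0, λ_k(x₀) ≠ λ_l(x₀), and F(x₀) ≠ 0. Then: (i) H(x)·ψ_k(x) = F(x)λ_k(x)·ψ_k(x) for all x near x₀ (so the eigenvalues of H are E_k = F·λ_k with the same eigenvectors as M); and (ii) ⟨ψ_l(x₀), H'(x₀)·ψ_k(x₀)⟩ / (F(x₀)λ_k(x₀) − F(x₀)λ_l(x₀)) = ⟨ψ_l(x₀), M'(x₀)·ψ_k(x₀)⟩ /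 (λ_k(x₀) − λ_l(x₀)). In particular the right-hand side is independent of F. -/
/-!
By the Leibniz rule `H' = F'·M + F·M'`. The `F'·M` term contributes `F'·λ_k⟨ψ_l, ψ_k⟩ = 0`,
and the remaining factor `F` cancels against the gap `F·λ_k − F·λ_l = F·(λ_k − λ_l)`.
-/

open Matrix

section Coupling

variable {n R : Type*} [Fintype n]

theorem Matrix.dotProduct_mulVec_eq_zero_of_eigen [CommSemiring R] {A : Matrix n n R}
    {u v : n → R} {c : R} (hv : A *ᵥ v = c • v) (huv : u ⬝ᵥ v = 0) : u ⬝ᵥ (A *ᵥ v) = 0 := by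
  rw [hv, dotProduct_smul, huv, smul_zero]

theorem Matrix.dotProduct_smul_add_mulVec_div_eq [Field R] {A B : Matrix n n R} {u v : n → R}
    {a b c₁ c₂ : R} (hv : A *ᵥ v = c₁ • v) (huv : u ⬝ᵥ v = 0) (hb : b ≠ 0) :
    u ⬝ᵥ ((a • A + b • B) *ᵥ v) / (b * c₁ - b * c₂) = u ⬝ᵥ (B *ᵥ v) / (c₁ - c₂) := by
  rw [add_mulVec, smul_mulVec, smul_mulVec, dotProduct_add, dotProduct_smul, dotProduct_smul,
    dotProduct_mulVec_eq_zero_of_eigen hv huv, smul_zero, zero_add, smul_eq_mul, ← mul_sub,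
    mul_div_mul_left _ _ hb]

end Coupling

theorem Matrix.eq_smul_add_smul_of_hasDerivAt_smul {𝕜 𝔸 m n : Type*}
    [NontriviallyNormedField 𝕜] [NormedRing 𝔸] [NormedAlgebra 𝕜 𝔸]
    {f : 𝕜 → 𝔸} {f' : 𝔸} {M : 𝕜 → Matrix m n 𝔸} {M' H' : Matrix m n 𝔸} {x₀ : 𝕜}
    (hf : HasDerivAt f f' x₀) (hM : ∀ i j, HasDerivAt (fun x => M x i j) (M' i j) x₀)
    (hH : ∀ i j, HasDerivAt (fun x => f x • M x i j) (H' i j) x₀) :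
    H' = f' • M x₀ + f x₀ • M' := by
  ext i j
  exact (hH i j).unique (hf.mul (hM i j))

theorem stmt_12_general (n : ℕ) (x₀ : ℝ)
    (M : ℝ → Matrix (Fin n) (Fin n) ℂ) (M' : Matrix (Fin n) (Fin n) ℂ)
    (hMderiv : ∀ i j, HasDerivAt (fun x => M x i j) (M' i j) x₀)
    (F : ℝ → ℝ) (F' : ℝ) (hFderiv : HasDerivAt F F' x₀)
    (ψk ψl : ℝ → Fin n → ℂ) (lamk laml : ℝ → ℝ)
    (heigk : ∀ᶠ x in nhds x₀, (M x).mulVec (ψk x) = ((lamk x : ℂ)) • ψk x)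
    (horth : ∑ i, (starRingEnd ℂ) (ψl x₀ i) * ψk x₀ i = 0)
    (hF : F x₀ ≠ 0) :
    (∀ᶠ x in nhds x₀,
        (((F x : ℂ)) • M x).mulVec (ψk x) = (((F x * lamk x : ℝ) : ℂ)) • ψk x) ∧
    (∀ H' : Matrix (Fin n) (Fin n) ℂ,
      (∀ i j, HasDerivAt (fun x => ((F x : ℂ)) • M x i j) (H' i j) x₀) →
      (∑ i, (starRingEnd ℂ) (ψl x₀ i) * (H'.mulVec (ψk x₀)) i)
          / (((F x₀ * lamk x₀ : ℝ) : ℂ) - ((F x₀ * laml x₀ : ℝ) : ℂ))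
        = (∑ i, (starRingEnd ℂ) (ψl x₀ i) * (M'.mulVec (ψk x₀)) i)
            / (((lamk x₀ : ℝ) : ℂ) - ((laml x₀ : ℝ) : ℂ))) := by
  refine ⟨?_, fun H' hH' => ?_⟩
  · filter_upwards [heigk] with x hx
    rw [smul_mulVec, hx, smul_smul, Complex.ofReal_mul]
  · rw [eq_smul_add_smul_of_hasDerivAt_smul hFderiv.ofReal_comp hMderiv hH',
      Complex.ofReal_mul, Complex.ofReal_mul]
    exact dotProduct_smul_add_mulVec_div_eq heigk.self_of_nhds horth (Complex.ofReal_ne_zero.2 hF)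

/-- For the family `H(x) = F(x)·M(x)` with common eigenvectors `ψ_k, ψ_l` of `M`:
(i) `ψ_k` is an eigenvector of `H` with eigenvalue `F·λ_k` near `x₀`; and
(ii) the coupling quotient `⟨ψ_l, H'ψ_k⟩/(Fλ_k − Fλ_l)` computed from the derivative
`H'` of `H` at `x₀` equals `⟨ψ_l, M'ψ_k⟩/(λ_k − λ_l)`, hence is independent of `F`. -/
theorem stmt_12 (n : ℕ) (hn : 1 ≤ n) (x₀ : ℝ)
    (M : ℝ → Matrix (Fin n) (Fin n) ℂ) (M' : Matrix (Fin n) (Fin n) ℂ)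
    (hMderiv : ∀ i j, HasDerivAt (fun x => M x i j) (M' i j) x₀)
    (F : ℝ → ℝ) (F' : ℝ) (hFderiv : HasDerivAt F F' x₀)
    (ψk ψl : ℝ → Fin n → ℂ) (lamk laml : ℝ → ℝ)
    (heigk : ∀ᶠ x in nhds x₀, (M x).mulVec (ψk x) = ((lamk x : ℂ)) • ψk x)
    (heigl : ∀ᶠ x in nhds x₀, (M x).mulVec (ψl x) = ((laml x : ℂ)) • ψl x)
    (horth : ∑ i, (starRingEnd ℂ) (ψl x₀ i) * ψk x₀ i = 0)
    (hgap : lamk x₀ ≠ laml x₀) (hF : F x₀ ≠ 0) :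
    (∀ᶠ x in nhds x₀,
        (((F x : ℂ)) • M x).mulVec (ψk x) = (((F x * lamk x : ℝ) : ℂ)) • ψk x) ∧
    (∀ H' : Matrix (Fin n) (Fin n) ℂ,
      (∀ i j, HasDerivAt (fun x => ((F x : ℂ)) • M x i j) (H' i j) x₀) →
      (∑ i, (starRingEnd ℂ) (ψl x₀ i) * (H'.mulVec (ψk x₀)) i)
          / (((F x₀ * lamk x₀ : ℝ) : ℂ) - ((F x₀ * laml x₀ : ℝ) : ℂ))
        = (∑ i, (starRingEnd ℂ) (ψl x₀ i) * (M'.mulVec (ψk x₀)) i)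
            / (((lamk x₀ : ℝ) : ℂ) - ((laml x₀ : ℝ) : ℂ))) :=
  stmt_12_general n x₀ M M' hMderiv F F' hFderiv ψk ψl lamk laml heigk horth hF
end
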